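/- For the block-structured Hadamard Response estimator p̂ with i.i.d. samples Y₁,...,Yₙ, the expected ℓ₁ error satisfies E[Σ_x |p̂_x − p_x|] ≤ (2(e^ε+1)/(e^ε−1)) · sqrt(3 Σ_{j=1}^m k_j² / n). -/
import Mathlib

/-- Sylvester's construction of Hadamard matrices. -/
def sylvester : (n : ℕ) → Fin (2 ^ n) → Fin (2 ^ n) → ℤ
  | 0 => fun _ _ => 1
  | n + 1 => fun i j =>
      (if (i : ℕ) < 2 ^ n ∨ (j : ℕ) < 2 ^ n then 1 else -1) *
        sylvester n ⟨(i : ℕ) % 2 ^ n, Nat.mod_lt _ (Nat.two_pow_pos n)⟩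
          ⟨(j : ℕ) % 2 ^ n, Nat.mod_lt _ (Nat.two_pow_pos n)⟩

/-- The block-structured Hadamard-response channel: input `(j, i)` (element `i`
of block `j`, with `|X_j| = k j`) is mapped to an output `(j, i')` with
`i' ∈ [K_j]`, `K_j = 2^{⌈log₂(k_j+1)⌉}`, with probability `2e^ε/(K_j(1+e^ε))`
if `i'` lies in the `+1` set of Hadamard row `i+1` and `2/(K_j(1+e^ε))`
otherwise; outputs in other blocks have probability `0`. -/
noncomputable def bsChannel (m : ℕ) (k : Fin m → ℕ) (ε : ℝ)
    (x : (j : Fin m) × Fin (k j))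
    (y : (j : Fin m) × Fin (2 ^ Nat.clog 2 (k j + 1))) : ℝ :=
  if h : y.1 = x.1 then
    if sylvester (Nat.clog 2 (k x.1 + 1))
        ⟨(x.2 : ℕ) + 1, by
          have := Nat.le_pow_clog (b := 2) (by norm_num) (k x.1 + 1)
          have := x.2.isLt; omega⟩
        (Fin.cast (by rw [h]) y.2) = 1 then
      2 * Real.exp ε / ((2 ^ Nat.clog 2 (k x.1 + 1) : ℝ) * (1 + Real.exp ε))
    else
      2 / ((2 ^ Nat.clog 2 (k x.1 + 1) : ℝ) * (1 + Real.exp ε))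
  else 0

/-- Membership of an output `y` in the Hadamard `+1` set `S_x` of input `x`
(in particular `y` must lie in the same block as `x`). -/
def bsInS (m : ℕ) (k : Fin m → ℕ)
    (x : (j : Fin m) × Fin (k j))
    (y : (j : Fin m) × Fin (2 ^ Nat.clog 2 (k j + 1))) : Bool :=
  if h : y.1 = x.1 then
    decide (sylvester (Nat.clog 2 (k x.1 + 1))
      ⟨(x.2 : ℕ) + 1, by
        have := Nat.le_pow_clog (b := 2) (by norm_num) (k x.1 + 1)
        have := x.2.isLt; omega⟩
      (Fin.cast (by rw [h]) y.2) = 1)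
  else false

/-! ### Sylvester matrix lemmas -/

/-- Sylvester matrix with ℕ indices (implicitly reduced mod `2^n`). -/
def sylN (n i j : ℕ) : ℤ :=
  sylvester n ⟨i % 2^n, Nat.mod_lt _ (Nat.two_pow_pos n)⟩ ⟨j % 2^n, Nat.mod_lt _ (Nat.two_pow_pos n)⟩

lemma sylvester_eq_sylN (n : ℕ) (i j : Fin (2^n)) : sylvester n i j = sylN n i j := by
  unfold sylN
  congr 1 <;> exact (Fin.ext (Nat.mod_eq_of_lt (by simp)).symm)

lemma sylN_zero (i j : ℕ) : sylN 0 i j = 1 := rfl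

lemma sylN_succ (n i j : ℕ) :
    sylN (n+1) i j = (if i % 2^(n+1) < 2^n ∨ j % 2^(n+1) < 2^n then 1 else -1) * sylN n i j := by
  show sylvester (n+1) _ _ = _
  rw [sylvester]
  unfold sylN
  congr 2 <;>
  · simp [Fin.mk.injEq, Nat.mod_mod_of_dvd _ (pow_dvd_pow 2 n.le_succ)]

lemma sylN_mod_left (n i j : ℕ) : sylN n (i % 2^n) j = sylN n i j := by
  unfold sylN; congr 1; exact Fin.ext (by simp [Nat.mod_mod_of_dvd])

lemma sylN_mod_right (n i j : ℕ) : sylN n i (j % 2^n) = sylN n i j := by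
  unfold sylN; congr 1; exact Fin.ext (by simp [Nat.mod_mod_of_dvd])

lemma sylN_pm (n i j : ℕ) : sylN n i j = 1 ∨ sylN n i j = -1 := by
  induction n generalizing i j with
  | zero => exact Or.inl rfl
  | succ n ih =>
    rw [sylN_succ]
    rcases ih i j with h | h <;> rw [h] <;> split <;> simp

lemma sylN_sq (n i j : ℕ) : sylN n i j * sylN n i j = 1 := by
  rcases sylN_pm n i j with h | h <;> rw [h] <;> norm_num

lemma sylN_row_zero (n j : ℕ) : sylN n 0 j = 1 := by
  induction n generalizing j with
  | zero => rfl
  | succ n ih =>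
    rw [sylN_succ, ih]
    have : 0 % 2^(n+1) < 2^n := by simp [Nat.two_pow_pos]
    rw [if_pos (Or.inl this), one_mul]

lemma sum_range_double {M : Type*} [AddCommMonoid M] (a : ℕ) (f : ℕ → M) :
    ∑ j ∈ Finset.range (a + a), f j
      = ∑ j ∈ Finset.range a, f j + ∑ j ∈ Finset.range a, f (a + j) := by
  rw [Finset.range_eq_Ico, ← Finset.sum_Ico_consecutive f (Nat.zero_le a) (Nat.le_add_right a a),
    ← Finset.range_eq_Ico, Finset.sum_Ico_eq_sum_range]
  simp

lemma sylN_orth (n : ℕ) : ∀ r r', r < 2^n → r' < 2^n →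
    ∑ j ∈ Finset.range (2^n), sylN n r j * sylN n r' j = if r = r' then (2^n : ℤ) else 0 := by
  induction n with
  | zero =>
    intro r r' hr hr'
    simp only [pow_zero, Nat.lt_one_iff] at hr hr'
    subst hr; subst hr'
    simp [sylN_zero]
  | succ n ih =>
    intro r r' hr hr'
    have h2 : (2:ℕ)^(n+1) = 2^n + 2^n := by ring
    rw [h2, sum_range_double]
    have hmod : ∀ i j : ℕ, j < 2^n → sylN (n+1) i (2^n + j) = (if i % 2^(n+1) < 2^n then 1 else -1) * sylN n i j := by
      intro i j hj
      rw [sylN_succ]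
      have hmr : (2^n + j) % 2^(n+1) = 2^n + j := Nat.mod_eq_of_lt (by omega)
      have : ¬ (2^n + j) % 2^(n+1) < 2^n := by omega
      have hj2 : sylN n i (2^n + j) = sylN n i j := by
        rw [← sylN_mod_right n i (2^n+j), Nat.add_mod_left, sylN_mod_right]
      rw [hj2]
      by_cases hi : i % 2^(n+1) < 2^n <;> simp [hi, this]
    have hlow : ∀ i j : ℕ, j < 2^n → sylN (n+1) i j = sylN n i j := by
      intro i j hj
      rw [sylN_succ]
      have : j % 2^(n+1) < 2^n := by rw [Nat.mod_eq_of_lt (by omega)]; exact hj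
      rw [if_pos (Or.inr this), one_mul]
    have hIH := ih (r % 2^n) (r' % 2^n) (Nat.mod_lt _ (Nat.two_pow_pos n)) (Nat.mod_lt _ (Nat.two_pow_pos n))
    have e1 : ∑ j ∈ Finset.range (2^n), sylN (n+1) r j * sylN (n+1) r' j
        = if r % 2^n = r' % 2^n then (2^n : ℤ) else 0 := by
      rw [← hIH]
      apply Finset.sum_congr rfl; intro j hj
      simp only [Finset.mem_range] at hj
      rw [hlow r j hj, hlow r' j hj, sylN_mod_left, sylN_mod_left]
    have e2 : ∑ j ∈ Finset.range (2^n), sylN (n+1) r (2^n + j) * sylN (n+1) r' (2^n + j)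
        = ((if r % 2^(n+1) < 2^n then 1 else -1) * (if r' % 2^(n+1) < 2^n then 1 else -1)) *
          (if r % 2^n = r' % 2^n then (2^n : ℤ) else 0) := by
      rw [← hIH, Finset.mul_sum]
      apply Finset.sum_congr rfl; intro j hj
      simp only [Finset.mem_range] at hj
      rw [hmod r j hj, hmod r' j hj, sylN_mod_left, sylN_mod_left]
      ring
    rw [e1, e2]
    have hrm : r % 2^(n+1) = r := Nat.mod_eq_of_lt (by omega)
    have hrm' : r' % 2^(n+1) = r' := Nat.mod_eq_of_lt (by omega)
    rw [hrm, hrm']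
    by_cases h1 : r < 2^n <;> by_cases h2' : r' < 2^n
    · have : r % 2^n = r ∧ r' % 2^n = r' := ⟨Nat.mod_eq_of_lt h1, Nat.mod_eq_of_lt h2'⟩
      rw [this.1, this.2, if_pos h1, if_pos h2']
      by_cases h : r = r' <;> simp [h] <;> push_cast <;> ring
    · have : r % 2^n = r := Nat.mod_eq_of_lt h1
      have hne : r ≠ r' := by omega
      rw [if_pos h1, if_neg h2', if_neg hne]
      by_cases h : r % 2^n = r' % 2^n <;> simp [h]
    · have hne : r ≠ r' := by omega
      rw [if_neg h1, if_pos h2', if_neg hne]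
      by_cases h : r % 2^n = r' % 2^n <;> simp [h]
    · have hrb : r < 2^n + 2^n := h2 ▸ hr
      have hrb' : r' < 2^n + 2^n := h2 ▸ hr'
      have hr2 : r % 2^n = r - 2^n := by
        rw [Nat.mod_eq_sub_mod (by omega)]; exact Nat.mod_eq_of_lt (by omega)
      have hr2' : r' % 2^n = r' - 2^n := by
        rw [Nat.mod_eq_sub_mod (by omega)]; exact Nat.mod_eq_of_lt (by omega)
      have hiff : (r % 2^n = r' % 2^n) ↔ (r = r') := by rw [hr2, hr2']; omega
      rw [if_neg h1, if_neg h2']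
      simp only [hiff]
      by_cases h : r = r' <;> simp [h] <;> push_cast <;> ring

lemma sylN_rowsum (n r : ℕ) (hr : r < 2^n) (h0 : r ≠ 0) :
    ∑ j ∈ Finset.range (2^n), sylN n r j = 0 := by
  have := sylN_orth n r 0 hr (Nat.two_pow_pos n)
  rw [if_neg h0] at this
  rw [← this]
  apply Finset.sum_congr rfl; intro j _
  rw [sylN_row_zero, mul_one]

lemma sylN_fin_rowsum (n r : ℕ) (hr : r < 2^n) (h0 : r ≠ 0) :
    ∑ l : Fin (2^n), ((sylN n r (l:ℕ) : ℤ) : ℝ) = 0 := by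
  rw [Fin.sum_univ_eq_sum_range (fun j => ((sylN n r j : ℤ) : ℝ)), ← Int.cast_sum,
    sylN_rowsum n r hr h0, Int.cast_zero]

lemma sylN_fin_orth (n r r' : ℕ) (hr : r < 2^n) (hr' : r' < 2^n) :
    ∑ l : Fin (2^n), ((sylN n r (l:ℕ) : ℤ) : ℝ) * ((sylN n r' (l:ℕ) : ℤ) : ℝ)
      = if r = r' then ((2:ℝ)^n) else 0 := by
  rw [Fin.sum_univ_eq_sum_range (fun j => ((sylN n r j : ℤ):ℝ) * ((sylN n r' j : ℤ):ℝ))]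
  have : ∀ j : ℕ, ((sylN n r j : ℤ):ℝ) * ((sylN n r' j : ℤ):ℝ) = ((sylN n r j * sylN n r' j : ℤ) : ℝ) := by
    intro j; push_cast; ring
  simp only [this]
  rw [← Int.cast_sum, sylN_orth n r r' hr hr']
  split <;> simp

/-! ### Product measure lemmas -/

open Finset

lemma pi_total {Ω : Type*} [Fintype Ω] {n : ℕ} (q : Ω → ℝ) (h1 : ∑ y, q y = 1) :
    ∑ ω : Fin n → Ω, ∏ s, q (ω s) = 1 := by
  rw [← Fintype.piFinset_univ, ← Finset.prod_univ_sum]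
  simp [h1]

lemma pi_two_coord {Ω : Type*} [Fintype Ω] [DecidableEq Ω] {n : ℕ} (q : Ω → ℝ)
    (h1 : ∑ y, q y = 1) (f g : Ω → ℝ) (t t' : Fin n) :
    ∑ ω : Fin n → Ω, (∏ s, q (ω s)) * (f (ω t) * g (ω t')) =
      if t = t' then ∑ y, q y * (f y * g y)
      else (∑ y, q y * f y) * (∑ y, q y * g y) := by
  set F : Fin n → Ω → ℝ :=
    fun s y => q y * ((if s = t then f y else 1) * (if s = t' then g y else 1)) with hF
  have key : ∀ ω : Fin n → Ω, (∏ s, q (ω s)) * (f (ω t) * g (ω t'))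
      = ∏ s, F s (ω s) := by
    intro ω
    simp only [hF]
    rw [Finset.prod_mul_distrib, Finset.prod_mul_distrib,
      Finset.prod_ite_eq' univ t (fun s => f (ω s)),
      Finset.prod_ite_eq' univ t' (fun s => g (ω s))]
    simp
  simp only [key]
  rw [← Fintype.piFinset_univ, Finset.sum_prod_piFinset univ F]
  by_cases h : t = t'
  · subst h
    simp only [if_pos rfl]
    have hsum : ∀ s : Fin n, (∑ y, F s y)
        = if s = t then ∑ y, q y * (f y * g y) else 1 := by
      intro s
      by_cases hs : s = t <;> simp [hF, hs, h1]
    simp only [hsum]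
    rw [Finset.prod_ite_eq' univ t (fun _ => ∑ y, q y * (f y * g y))]
    simp
  · rw [if_neg h]
    have hsum : ∀ s : Fin n, (∑ y, F s y)
        = (if s = t then ∑ y, q y * f y else 1) * (if s = t' then ∑ y, q y * g y else 1) := by
      intro s
      by_cases hs : s = t <;> by_cases hs' : s = t' <;> simp [hF, hs, hs', h1] <;> simp_all
    simp only [hsum]
    rw [Finset.prod_mul_distrib,
      Finset.prod_ite_eq' univ t (fun _ => ∑ y, q y * f y),
      Finset.prod_ite_eq' univ t' (fun _ => ∑ y, q y * g y)]
    simp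

lemma pi_one_coord {Ω : Type*} [Fintype Ω] [DecidableEq Ω] {n : ℕ} (q : Ω → ℝ)
    (h1 : ∑ y, q y = 1) (f : Ω → ℝ) (t : Fin n) :
    ∑ ω : Fin n → Ω, (∏ s, q (ω s)) * f (ω t) = ∑ y, q y * f y := by
  have := pi_two_coord q h1 f (fun _ => 1) t t
  simpa using this

lemma pi_var {Ω : Type*} [Fintype Ω] [DecidableEq Ω] {n : ℕ} (hn : 0 < n) (q : Ω → ℝ)
    (h1 : ∑ y, q y = 1) (Z : Ω → ℝ) (μ : ℝ) (hμ : μ = ∑ y, q y * Z y) :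
    ∑ ω : Fin n → Ω, (∏ s, q (ω s)) * ((1/(n:ℝ)) * (∑ t, Z (ω t)) - μ)^2
      = ((∑ y, q y * (Z y)^2) - μ^2) / n := by
  have key : ∀ ω : Fin n → Ω, (∏ s, q (ω s)) * ((1/(n:ℝ)) * (∑ t, Z (ω t)) - μ)^2
      = (1/(n:ℝ)^2) * (∑ t, ∑ t', (∏ s, q (ω s)) * (Z (ω t) * Z (ω t')))
        - (2*μ/(n:ℝ)) * (∑ t, (∏ s, q (ω s)) * Z (ω t))
        + μ^2 * (∏ s, q (ω s)) := by
    intro ω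
    have e1 : ∑ t, ∑ t', (∏ s, q (ω s)) * (Z (ω t) * Z (ω t'))
        = (∏ s, q (ω s)) * ((∑ t, Z (ω t)) * (∑ t', Z (ω t'))) := by
      rw [Finset.sum_mul_sum, Finset.mul_sum]
      exact Finset.sum_congr rfl fun t _ => by rw [Finset.mul_sum]
    have e2 : ∑ t, (∏ s, q (ω s)) * Z (ω t) = (∏ s, q (ω s)) * ∑ t, Z (ω t) := by
      rw [Finset.mul_sum]
    rw [e1, e2]; ring
  simp only [key]
  rw [Finset.sum_add_distrib, Finset.sum_sub_distrib, ← Finset.mul_sum, ← Finset.mul_sum,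
    ← Finset.mul_sum]
  rw [Finset.sum_comm]
  have swap2 : ∀ t : Fin n, ∑ ω : Fin n → Ω, ∑ t', (∏ s, q (ω s)) * (Z (ω t) * Z (ω t'))
      = ∑ t' : Fin n, ∑ ω : Fin n → Ω, (∏ s, q (ω s)) * (Z (ω t) * Z (ω t')) :=
    fun t => Finset.sum_comm
  simp only [swap2, pi_two_coord q h1 Z Z, pi_one_coord q h1 Z, pi_total q h1, ← hμ]
  have hn' : (n:ℝ) ≠ 0 := Nat.cast_ne_zero.mpr hn.ne'
  have hM : ∀ t : Fin n, (∑ t' : Fin n,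
      if t = t' then ∑ y, q y * (Z y * Z y) else μ * μ)
      = (n - 1 : ℝ) * (μ * μ) + ∑ y, q y * (Z y * Z y) := by
    intro t
    have : ∀ t' : Fin n, (if t = t' then ∑ y, q y * (Z y * Z y) else μ * μ)
        = μ * μ + (if t = t' then (∑ y, q y * (Z y * Z y)) - μ * μ else 0) := by
      intro t'; by_cases h : t = t' <;> simp [h]
    simp only [this]
    rw [Finset.sum_add_distrib, Finset.sum_const, Finset.sum_ite_eq univ t, Finset.card_univ,
      Fintype.card_fin, nsmul_eq_mul]
    simp; ring
  have swap1 : (∑ ω : Fin n → Ω, ∑ t, (∏ s, q (ω s)) * Z (ω t))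
      = ∑ t : Fin n, ∑ ω : Fin n → Ω, (∏ s, q (ω s)) * Z (ω t) := Finset.sum_comm
  rw [swap1]
  simp only [pi_one_coord q h1 Z, ← hμ, hM]
  rw [Finset.sum_const, Finset.sum_const, Finset.card_univ, Fintype.card_fin, nsmul_eq_mul,
    nsmul_eq_mul]
  have hZZ : ∑ y, q y * (Z y * Z y) = ∑ y, q y * (Z y)^2 := by
    apply Finset.sum_congr rfl; intro y _; ring
  rw [hZZ]
  field_simp
  ring

lemma sum_abs_le_sqrt {ι : Type*} [Fintype ι] (w f : ι → ℝ) (hw : ∀ i, 0 ≤ w i)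
    (h1 : ∑ i, w i = 1) :
    ∑ i, w i * |f i| ≤ Real.sqrt (∑ i, w i * (f i)^2) := by
  rw [show (∑ i, w i * |f i|) = ∑ i, Real.sqrt (w i) * (Real.sqrt (w i) * |f i|) from
    Finset.sum_congr rfl fun i _ => by
      rw [← mul_assoc, Real.mul_self_sqrt (hw i)]]
  have cs := Finset.sum_mul_sq_le_sq_mul_sq Finset.univ (fun i => Real.sqrt (w i))
    (fun i => Real.sqrt (w i) * |f i|)
  have h2 : ∑ i, (Real.sqrt (w i))^2 = 1 := by
    rw [← h1]; exact Finset.sum_congr rfl fun i _ => Real.sq_sqrt (hw i)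
  have h3 : ∑ i, (Real.sqrt (w i) * |f i|)^2 = ∑ i, w i * (f i)^2 := by
    apply Finset.sum_congr rfl; intro i _
    rw [mul_pow, Real.sq_sqrt (hw i), sq_abs]
  rw [h2, h3, one_mul] at cs
  have hnn : 0 ≤ ∑ i, Real.sqrt (w i) * (Real.sqrt (w i) * |f i|) :=
    Finset.sum_nonneg fun i _ => mul_nonneg (Real.sqrt_nonneg _)
      (mul_nonneg (Real.sqrt_nonneg _) (abs_nonneg _))
  exact (Real.le_sqrt hnn (Finset.sum_nonneg fun i _ => mul_nonneg (hw i) (sq_nonneg _))).mpr cs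

lemma sum_sqrt_cs {ι : Type*} [Fintype ι] (a v : ι → ℝ) (ha : ∀ i, 0 ≤ a i)
    (hv : ∀ i, 0 ≤ v i) :
    ∑ i, a i * Real.sqrt (v i) ≤ Real.sqrt ((∑ i, (a i)^2) * ∑ i, v i) := by
  have cs := Finset.sum_mul_sq_le_sq_mul_sq Finset.univ a (fun i => Real.sqrt (v i))
  have h3 : ∑ i, (Real.sqrt (v i))^2 = ∑ i, v i :=
    Finset.sum_congr rfl fun i _ => Real.sq_sqrt (hv i)
  rw [h3] at cs
  have hnn : 0 ≤ ∑ i, a i * Real.sqrt (v i) :=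
    Finset.sum_nonneg fun i _ => mul_nonneg (ha i) (Real.sqrt_nonneg _)
  exact (Real.le_sqrt hnn (mul_nonneg (Finset.sum_nonneg fun i _ => sq_nonneg _)
    (Finset.sum_nonneg fun i _ => hv i))).mpr cs

/-! ### Channel lemmas -/

lemma sum_sigma_fin {m : ℕ} {β : Fin m → Type*} [∀ j, Fintype (β j)]
    (F : ((j : Fin m) × β j) → ℝ) :
    ∑ y : (j : Fin m) × β j, F y = ∑ j, ∑ i, F ⟨j, i⟩ := by
  rw [← Finset.univ_sigma_univ, Finset.sum_sigma]

section Channel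

variable {m : ℕ} {k : Fin m → ℕ} {ε : ℝ}

lemma row_lt (x : (j : Fin m) × Fin (k j)) :
    (x.2 : ℕ) + 1 < 2 ^ Nat.clog 2 (k x.1 + 1) := by
  have h := Nat.le_pow_clog (b := 2) (by norm_num) (k x.1 + 1)
  have := x.2.isLt; omega

lemma bsChannel_ne (x : (j : Fin m) × Fin (k j))
    (y : (j : Fin m) × Fin (2 ^ Nat.clog 2 (k j + 1))) (h : y.1 ≠ x.1) :
    bsChannel m k ε x y = 0 := by
  unfold bsChannel; rw [dif_neg h]

lemma bsInS_ne (x : (j : Fin m) × Fin (k j))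
    (y : (j : Fin m) × Fin (2 ^ Nat.clog 2 (k j + 1))) (h : y.1 ≠ x.1) :
    bsInS m k x y = false := by
  unfold bsInS; rw [dif_neg h]

lemma bsChannel_same (x : (j : Fin m) × Fin (k j))
    (l : Fin (2 ^ Nat.clog 2 (k x.1 + 1))) :
    bsChannel m k ε x ⟨x.1, l⟩ =
      if sylN (Nat.clog 2 (k x.1 + 1)) ((x.2 : ℕ) + 1) (l : ℕ) = 1 then
        2 * Real.exp ε / ((2 ^ Nat.clog 2 (k x.1 + 1) : ℝ) * (1 + Real.exp ε))
      else
        2 / ((2 ^ Nat.clog 2 (k x.1 + 1) : ℝ) * (1 + Real.exp ε)) := by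
  unfold bsChannel
  rw [dif_pos rfl]
  exact if_congr (by rw [sylvester_eq_sylN]; exact Iff.rfl) rfl rfl

lemma bsInS_same (x : (j : Fin m) × Fin (k j))
    (l : Fin (2 ^ Nat.clog 2 (k x.1 + 1))) :
    bsInS m k x ⟨x.1, l⟩
      = decide (sylN (Nat.clog 2 (k x.1 + 1)) ((x.2 : ℕ) + 1) (l : ℕ) = 1) := by
  unfold bsInS
  rw [dif_pos rfl, decide_eq_decide]
  rw [sylvester_eq_sylN]
  exact Iff.rfl

lemma bsChannel_affine (x : (j : Fin m) × Fin (k j))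
    (l : Fin (2 ^ Nat.clog 2 (k x.1 + 1))) :
    bsChannel m k ε x ⟨x.1, l⟩ =
      (Real.exp ε + 1) / ((2 ^ Nat.clog 2 (k x.1 + 1) : ℝ) * (1 + Real.exp ε))
      + (Real.exp ε - 1) / ((2 ^ Nat.clog 2 (k x.1 + 1) : ℝ) * (1 + Real.exp ε))
        * ((sylN (Nat.clog 2 (k x.1 + 1)) ((x.2 : ℕ) + 1) (l : ℕ) : ℤ) : ℝ) := by
  rw [bsChannel_same]
  rcases sylN_pm (Nat.clog 2 (k x.1 + 1)) ((x.2 : ℕ) + 1) (l : ℕ) with h | h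
  · rw [if_pos h, h]; push_cast; ring
  · rw [if_neg (by rw [h]; norm_num), h]; push_cast; ring

lemma indS_affine (x : (j : Fin m) × Fin (k j))
    (l : Fin (2 ^ Nat.clog 2 (k x.1 + 1))) :
    (if bsInS m k x ⟨x.1, l⟩ then (1:ℝ) else 0)
      = (1 + ((sylN (Nat.clog 2 (k x.1 + 1)) ((x.2 : ℕ) + 1) (l : ℕ) : ℤ) : ℝ)) / 2 := by
  rw [bsInS_same]
  rcases sylN_pm (Nat.clog 2 (k x.1 + 1)) ((x.2 : ℕ) + 1) (l : ℕ) with h | h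
  · rw [h]; norm_num
  · rw [h]; norm_num

lemma bsInS_block (x : (j : Fin m) × Fin (k j))
    (y : (j : Fin m) × Fin (2 ^ Nat.clog 2 (k j + 1))) (h : bsInS m k x y = true) :
    y.1 = x.1 := by
  by_contra hne
  rw [bsInS_ne x y hne] at h
  exact Bool.noConfusion h

lemma bsChannel_nonneg (hε : 0 < ε) (x : (j : Fin m) × Fin (k j))
    (y : (j : Fin m) × Fin (2 ^ Nat.clog 2 (k j + 1))) :
    0 ≤ bsChannel m k ε x y := by
  unfold bsChannel
  have h1 : (0:ℝ) < 1 + Real.exp ε := by positivity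
  have h2 : (0:ℝ) < (2 ^ Nat.clog 2 (k x.1 + 1) : ℝ) := by positivity
  split
  · split
    · positivity
    · positivity
  · exact le_refl 0

lemma channel_rowsum (hε : 0 < ε) (x : (j : Fin m) × Fin (k j)) :
    ∑ y : (j : Fin m) × Fin (2 ^ Nat.clog 2 (k j + 1)), bsChannel m k ε x y = 1 := by
  rw [sum_sigma_fin (bsChannel m k ε x)]
  rw [Finset.sum_eq_single x.1]
  · set n0 := Nat.clog 2 (k x.1 + 1) with hn0
    have hK : (0:ℝ) < (2 ^ n0 : ℝ) := by positivity
    have hE : (0:ℝ) < 1 + Real.exp ε := by positivity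
    simp only [bsChannel_affine]
    rw [Finset.sum_add_distrib, Finset.sum_const, ← Finset.mul_sum,
      sylN_fin_rowsum n0 ((x.2:ℕ)+1) (row_lt x) (by omega), Finset.card_univ,
      Fintype.card_fin, nsmul_eq_mul, mul_zero, add_zero]
    rw [show ((2 ^ n0 : ℕ) : ℝ) = (2:ℝ)^n0 by push_cast; ring]
    field_simp
    ring
  · intro j _ hj
    exact Finset.sum_eq_zero fun l _ => bsChannel_ne x ⟨j, l⟩ hj
  · intro h
    exact absurd (Finset.mem_univ x.1) h

lemma channel_Z (hε : 0 < ε) (x x' : (j : Fin m) × Fin (k j)) :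
    ∑ y : (j : Fin m) × Fin (2 ^ Nat.clog 2 (k j + 1)),
        bsChannel m k ε x' y *
          ((if bsInS m k x y then (1:ℝ) else 0) - (1/2) * (if y.1 = x.1 then 1 else 0))
      = if x' = x then (Real.exp ε - 1) / (2 * (Real.exp ε + 1)) else 0 := by
  obtain ⟨j', i'⟩ := x'
  obtain ⟨j0, i⟩ := x
  rw [sum_sigma_fin]
  rw [Finset.sum_eq_single j']
  · by_cases hjj : j' = j0
    · subst hjj
      set n0 := Nat.clog 2 (k j' + 1) with hn0
      have hK : (0:ℝ) < (2 ^ n0 : ℝ) := by positivity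
      have hE : (0:ℝ) < 1 + Real.exp ε := by positivity
      set A := (Real.exp ε + 1) / ((2 ^ n0 : ℝ) * (1 + Real.exp ε)) with hA
      set B := (Real.exp ε - 1) / ((2 ^ n0 : ℝ) * (1 + Real.exp ε)) with hB
      have hptw : ∀ l : Fin (2 ^ n0),
          bsChannel m k ε ⟨j', i'⟩ ⟨j', l⟩ *
            ((if bsInS m k ⟨j', i⟩ ⟨j', l⟩ then (1:ℝ) else 0) - 1/2)
          = (A/2) * ((sylN n0 ((i:ℕ)+1) (l:ℕ) : ℤ) : ℝ)
            + (B/2) * (((sylN n0 ((i':ℕ)+1) (l:ℕ) : ℤ) : ℝ) * ((sylN n0 ((i:ℕ)+1) (l:ℕ) : ℤ) : ℝ)) := by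
        intro l
        rw [bsChannel_affine ⟨j', i'⟩ l, indS_affine ⟨j', i⟩ l]
        ring
      simp only [eq_self_iff_true, if_true, mul_one]
      simp only [hptw]
      rw [Finset.sum_add_distrib, ← Finset.mul_sum, ← Finset.mul_sum,
        sylN_fin_rowsum n0 ((i:ℕ)+1) (row_lt ⟨j', i⟩) (by omega),
        sylN_fin_orth n0 ((i':ℕ)+1) ((i:ℕ)+1) (row_lt ⟨j', i'⟩) (row_lt ⟨j', i⟩)]
      rw [mul_zero, zero_add]
      have hiff : ((i':ℕ) + 1 = (i:ℕ) + 1)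
          ↔ ((⟨j', i'⟩ : (j : Fin m) × Fin (k j)) = ⟨j', i⟩) := by
        simp [Sigma.mk.inj_iff, Fin.ext_iff]
      by_cases hii : (⟨j', i'⟩ : (j : Fin m) × Fin (k j)) = ⟨j', i⟩
      · rw [if_pos (hiff.mpr hii), if_pos hii, hB]
        field_simp
        ring
      · rw [if_neg (fun hc => hii (hiff.mp hc)), if_neg hii, mul_zero]
    · have hne : (⟨j', i'⟩ : (j : Fin m) × Fin (k j)) ≠ ⟨j0, i⟩ := by
        intro hc; exact hjj (congrArg Sigma.fst hc)
      rw [if_neg hne]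
      apply Finset.sum_eq_zero
      intro l _
      have h1 : bsInS m k ⟨j0, i⟩ ⟨j', l⟩ = false := bsInS_ne _ _ (by exact hjj)
      rw [h1]
      simp [hjj]
  · intro j _ hj
    exact Finset.sum_eq_zero fun l _ => by
      rw [bsChannel_ne ⟨j', i'⟩ ⟨j, l⟩ (by exact hj), zero_mul]
  · intro h
    exact absurd (Finset.mem_univ j') h

lemma Zsq (x : (j : Fin m) × Fin (k j))
    (y : (j : Fin m) × Fin (2 ^ Nat.clog 2 (k j + 1))) :
    ((if bsInS m k x y then (1:ℝ) else 0) - (1/2) * (if y.1 = x.1 then 1 else 0))^2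
      = (1/4) * (if y.1 = x.1 then 1 else 0) := by
  by_cases hb : y.1 = x.1
  · rw [if_pos hb]
    cases hS : bsInS m k x y <;> simp [hS] <;> norm_num
  · have hf : bsInS m k x y = false := bsInS_ne x y hb
    simp [hf, hb]


end Channel

/-- Expected ℓ₁ error of the block-structured Hadamard-response estimator
with `n` i.i.d. samples:
`E[Σ_x |p̂_x - p_x|] ≤ (2(e^ε+1)/(e^ε-1)) √(3 Σ_j k_j² / n)`. -/
theorem bs_estimator_l1_bound (m : ℕ) (k : Fin m → ℕ) (hk : ∀ j, 0 < k j)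
    (ε : ℝ) (hε : 0 < ε)
    (p : ((j : Fin m) × Fin (k j)) → ℝ) (hp0 : ∀ x, 0 ≤ p x) (hp1 : ∑ x, p x = 1)
    (n : ℕ) (hn : 0 < n) :
    ∑ ω : Fin n → ((j : Fin m) × Fin (2 ^ Nat.clog 2 (k j + 1))),
        (∏ t, ∑ x, p x * bsChannel m k ε x (ω t)) *
        (∑ x, |(2 * (Real.exp ε + 1) / (Real.exp ε - 1)) *
              ((1 / (n : ℝ)) * (∑ t, if bsInS m k x (ω t) then (1 : ℝ) else 0)
                - (1 / 2) * ((1 / (n : ℝ)) * ∑ t, if (ω t).1 = x.1 then (1 : ℝ) else 0))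
            - p x|)
      ≤ (2 * (Real.exp ε + 1) / (Real.exp ε - 1))
          * Real.sqrt (3 * (∑ j, ((k j : ℕ) : ℝ) ^ 2) / (n : ℝ)) := by
  classical
  have hexp : 1 < Real.exp ε := by
    have := Real.exp_lt_exp.mpr hε; simpa using this
  have he1 : (0:ℝ) < Real.exp ε - 1 := by linarith
  have he2 : (0:ℝ) < Real.exp ε + 1 := by linarith
  set c : ℝ := 2 * (Real.exp ε + 1) / (Real.exp ε - 1) with hc
  set d : ℝ := (Real.exp ε - 1) / (2 * (Real.exp ε + 1)) with hd
  have hc0 : 0 < c := div_pos (by linarith) he1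
  have hcd : c * d = 1 := by rw [hc, hd]; field_simp
  set Ω := (j : Fin m) × Fin (2 ^ Nat.clog 2 (k j + 1)) with hΩ
  set q : Ω → ℝ := fun y => ∑ x, p x * bsChannel m k ε x y with hqdef
  have hq0 : ∀ y, 0 ≤ q y := fun y =>
    Finset.sum_nonneg fun x _ => mul_nonneg (hp0 x) (bsChannel_nonneg hε x y)
  have hq1 : ∑ y, q y = 1 := by
    rw [hqdef]
    rw [Finset.sum_comm]
    calc ∑ x, ∑ y : Ω, p x * bsChannel m k ε x y
        = ∑ x, p x * ∑ y : Ω, bsChannel m k ε x y := by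
          exact Finset.sum_congr rfl fun x _ => (Finset.mul_sum _ _ _).symm
      _ = ∑ x, p x := by
          exact Finset.sum_congr rfl fun x _ => by rw [channel_rowsum hε x, mul_one]
      _ = 1 := hp1
  set Z : ((j : Fin m) × Fin (k j)) → Ω → ℝ := fun x y =>
    (if bsInS m k x y then (1:ℝ) else 0) - (1/2) * (if y.1 = x.1 then 1 else 0) with hZdef
  set μ : ((j : Fin m) × Fin (k j)) → ℝ := fun x => ∑ y, q y * Z x y with hμdef
  have hμ : ∀ x, μ x = d * p x := by
    intro x
    calc μ x = ∑ y : Ω, ∑ x', (p x' * bsChannel m k ε x' y) * Z x y := by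
          apply Finset.sum_congr rfl; intro y _
          rw [hqdef]; exact Finset.sum_mul _ _ _
      _ = ∑ x', p x' * ∑ y : Ω, bsChannel m k ε x' y * Z x y := by
          rw [Finset.sum_comm]
          apply Finset.sum_congr rfl; intro x' _
          rw [Finset.mul_sum]
          exact Finset.sum_congr rfl fun y _ => by ring
      _ = ∑ x', p x' * (if x' = x then d else 0) := by
          apply Finset.sum_congr rfl; intro x' _
          rw [hZdef, channel_Z hε x x', hd]
      _ = d * p x := by
          simp only [mul_ite, mul_zero]
          rw [Finset.sum_ite_eq' Finset.univ x (fun x' => p x' * d)]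
          simp [mul_comm]
  have hpx : ∀ x, p x = c * μ x := by
    intro x
    rw [hμ x, ← mul_assoc, hcd, one_mul]
  set Q : Fin m → ℝ := fun j => ∑ l, q ⟨j, l⟩ with hQdef
  have hQ0 : ∀ j, 0 ≤ Q j := fun j => Finset.sum_nonneg fun l _ => hq0 _
  have hQ1 : ∑ j, Q j = 1 := by rw [← hq1, sum_sigma_fin q]
  have hM2 : ∀ x, ∑ y, q y * (Z x y)^2 = Q x.1 / 4 := by
    intro x
    have hp : ∀ y : Ω, q y * (Z x y)^2
        = (1/4) * (q y * (if y.1 = x.1 then 1 else 0)) := by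
      intro y
      rw [hZdef]
      rw [Zsq x y]
      ring
    rw [Finset.sum_congr rfl fun y _ => hp y, ← Finset.mul_sum]
    have hB : ∑ y : Ω, q y * (if y.1 = x.1 then (1:ℝ) else 0) = Q x.1 := by
      rw [sum_sigma_fin (fun y : Ω => q y * (if y.1 = x.1 then (1:ℝ) else 0))]
      rw [Finset.sum_eq_single x.1]
      · rw [hQdef]
        exact Finset.sum_congr rfl fun l _ => by simp
      · intro j _ hj
        exact Finset.sum_eq_zero fun l _ => by simp [hj]
      · intro h; exact absurd (Finset.mem_univ x.1) h
    rw [hB]; ring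
  -- rewrite the summand using Z and μ
  have step0 : ∀ (ω : Fin n → Ω) (x : (j : Fin m) × Fin (k j)),
      |c * ((1 / (n : ℝ)) * (∑ t, if bsInS m k x (ω t) then (1 : ℝ) else 0)
          - (1 / 2) * ((1 / (n : ℝ)) * ∑ t, if (ω t).1 = x.1 then (1 : ℝ) else 0)) - p x|
      = c * |(1/(n:ℝ)) * (∑ t, Z x (ω t)) - μ x| := by
    intro ω x
    have hT : (1 / (n : ℝ)) * (∑ t, if bsInS m k x (ω t) then (1 : ℝ) else 0)
        - (1 / 2) * ((1 / (n : ℝ)) * ∑ t, if (ω t).1 = x.1 then (1 : ℝ) else 0)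
        = (1/(n:ℝ)) * ∑ t, Z x (ω t) := by
      rw [hZdef]
      rw [Finset.sum_sub_distrib]
      rw [← Finset.mul_sum]
      ring
    rw [hT, hpx x, show c * ((1/(n:ℝ)) * ∑ t, Z x (ω t)) - c * μ x
      = c * ((1/(n:ℝ)) * (∑ t, Z x (ω t)) - μ x) from by ring, abs_mul, abs_of_pos hc0]
  calc ∑ ω : Fin n → Ω,
        (∏ t, ∑ x, p x * bsChannel m k ε x (ω t)) *
        (∑ x, |c * ((1 / (n : ℝ)) * (∑ t, if bsInS m k x (ω t) then (1 : ℝ) else 0)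
                - (1 / 2) * ((1 / (n : ℝ)) * ∑ t, if (ω t).1 = x.1 then (1 : ℝ) else 0))
            - p x|)
      = ∑ ω : Fin n → Ω, (∏ t, q (ω t)) *
          ∑ x, c * |(1/(n:ℝ)) * (∑ t, Z x (ω t)) - μ x| := by
        apply Finset.sum_congr rfl; intro ω _
        congr 1
        exact Finset.sum_congr rfl fun x _ => step0 ω x
    _ = ∑ ω : Fin n → Ω, ∑ x, c * ((∏ t, q (ω t)) * |(1/(n:ℝ)) * (∑ t, Z x (ω t)) - μ x|) := by
        apply Finset.sum_congr rfl; intro ω _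
        rw [Finset.mul_sum]
        exact Finset.sum_congr rfl fun x _ => by ring
    _ = ∑ x, ∑ ω : Fin n → Ω, c * ((∏ t, q (ω t)) * |(1/(n:ℝ)) * (∑ t, Z x (ω t)) - μ x|) :=
        Finset.sum_comm
    _ = c * ∑ x, ∑ ω : Fin n → Ω, (∏ t, q (ω t)) * |(1/(n:ℝ)) * (∑ t, Z x (ω t)) - μ x| := by
        rw [Finset.mul_sum]
        apply Finset.sum_congr rfl; intro x _
        rw [Finset.mul_sum]
    _ ≤ c * ∑ x : (j : Fin m) × Fin (k j), Real.sqrt (Q x.1 / (4 * n)) := by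
        apply mul_le_mul_of_nonneg_left _ hc0.le
        apply Finset.sum_le_sum; intro x _
        calc ∑ ω : Fin n → Ω, (∏ t, q (ω t)) * |(1/(n:ℝ)) * (∑ t, Z x (ω t)) - μ x|
            ≤ Real.sqrt (∑ ω : Fin n → Ω, (∏ t, q (ω t)) * ((1/(n:ℝ)) * (∑ t, Z x (ω t)) - μ x)^2) := by
              exact sum_abs_le_sqrt _ _ (fun ω => Finset.prod_nonneg fun t _ => hq0 _)
                (pi_total q hq1)
          _ = Real.sqrt (((∑ y, q y * (Z x y)^2) - (μ x)^2) / n) := by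
              rw [pi_var hn q hq1 (Z x) (μ x) rfl]
          _ ≤ Real.sqrt (Q x.1 / (4 * n)) := by
              apply Real.sqrt_le_sqrt
              rw [hM2 x]
              have hn' : (0:ℝ) < n := Nat.cast_pos.mpr hn
              have h1 : Q x.1 / 4 - (μ x)^2 ≤ Q x.1 / 4 := by nlinarith [sq_nonneg (μ x)]
              calc (Q x.1 / 4 - (μ x)^2) / n ≤ (Q x.1 / 4) / n :=
                    (div_le_div_iff_of_pos_right hn').mpr h1
                _ = Q x.1 / (4 * n) := by ring
    _ = c * ∑ j, (k j : ℝ) * Real.sqrt (Q j / (4 * n)) := by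
        congr 1
        rw [sum_sigma_fin (fun x : (j : Fin m) × Fin (k j) => Real.sqrt (Q x.1 / (4 * n)))]
        apply Finset.sum_congr rfl; intro j _
        show (∑ _i : Fin (k j), Real.sqrt (Q j / (4 * (n:ℝ)))) = (k j : ℝ) * Real.sqrt (Q j / (4 * (n:ℝ)))
        rw [Finset.sum_const, Finset.card_univ, Fintype.card_fin, nsmul_eq_mul]
    _ ≤ c * Real.sqrt ((∑ j, ((k j : ℝ))^2) * ∑ j, Q j / (4 * n)) := by
        apply mul_le_mul_of_nonneg_left _ hc0.le
        exact sum_sqrt_cs _ _ (fun j => Nat.cast_nonneg _)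
          (fun j => div_nonneg (hQ0 j) (by positivity))
    _ ≤ c * Real.sqrt (3 * (∑ j, ((k j : ℕ) : ℝ) ^ 2) / (n : ℝ)) := by
        apply mul_le_mul_of_nonneg_left _ hc0.le
        apply Real.sqrt_le_sqrt
        rw [← Finset.sum_div, hQ1]
        have hS0 : (0:ℝ) ≤ ∑ j, ((k j : ℝ))^2 := Finset.sum_nonneg fun j _ => sq_nonneg _
        have hn' : (0:ℝ) < n := Nat.cast_pos.mpr hn
        rw [mul_one_div, div_le_div_iff₀ (by positivity) hn']
        nlinarith [hS0, hn']
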